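/- arXiv:2309.14632 — 3 statements merged into one kernel-verified Lean document; each statement's English description precedes it below -/
import Mathlib

section
/- Let X be an nq-space (a topological space for which nq(X) is defined). Then the density of X satisfies d(X) ≤ πχ(X)^(c(X)·nq(X)), i.e., X has a dense subset of cardinality at most πχ(X) raised (in the sense of cardinal exponentiation) to the power c(X)·nq(X). -/
open Cardinal Set TopologicalSpace

universe u

/-- The density of a space: the least cardinality of a dense subset. -/
noncomputable def dens (X : Type u) [TopologicalSpace X] : Cardinal.{u} :=
  sInf {c : Cardinal.{u} | ∃ D : Set X, Dense D ∧ #D = c}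

/-- A local π-base at a point: a family of nonempty open sets such that every
open set containing the point contains a member of the family. -/
def IsLocalPiBase (X : Type u) [TopologicalSpace X] (x : X) (𝒱 : Set (Set X)) : Prop :=
  (∀ V ∈ 𝒱, IsOpen V ∧ V.Nonempty) ∧
    ∀ U : Set X, IsOpen U → x ∈ U → ∃ V ∈ 𝒱, V ⊆ U

/-- The π-character at a point: the least infinite cardinality of a local π-base. -/
noncomputable def piCharPoint (X : Type u) [TopologicalSpace X] (x : X) : Cardinal.{u} :=
  sInf {κ : Cardinal.{u} | ℵ₀ ≤ κ ∧ ∃ 𝒱 : Set (Set X), IsLocalPiBase X x 𝒱 ∧ #𝒱 ≤ κ}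

/-- The π-character of a space. -/
noncomputable def piChar (X : Type u) [TopologicalSpace X] : Cardinal.{u} :=
  ⨆ x : X, piCharPoint X x

/-- A π-base for a space. -/
def IsPiBase (X : Type u) [TopologicalSpace X] (𝒱 : Set (Set X)) : Prop :=
  (∀ V ∈ 𝒱, IsOpen V ∧ V.Nonempty) ∧
    ∀ U : Set X, IsOpen U → U.Nonempty → ∃ V ∈ 𝒱, V ⊆ U

/-- The π-weight of a space: the least infinite cardinality of a π-base. -/
noncomputable def piWeight (X : Type u) [TopologicalSpace X] : Cardinal.{u} :=
  sInf {κ : Cardinal.{u} | ℵ₀ ≤ κ ∧ ∃ 𝒱 : Set (Set X), IsPiBase X 𝒱 ∧ #𝒱 ≤ κ}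

/-- The cellularity of a space: the least infinite cardinal bounding the size of
every pairwise disjoint family of nonempty open sets. -/
noncomputable def cellularity (X : Type u) [TopologicalSpace X] : Cardinal.{u} :=
  sInf {κ : Cardinal.{u} | ℵ₀ ≤ κ ∧ ∀ 𝒞 : Set (Set X),
    (∀ U ∈ 𝒞, IsOpen U ∧ U.Nonempty) → 𝒞.PairwiseDisjoint id → #𝒞 ≤ κ}

/-- The set of infinite cardinals κ witnessing the nonquasiregularity degree:
every nonempty open set U contains a nonempty set ⋂₀ 𝒱 with 𝒱 an open family of
size at most κ and ⋂_{V ∈ 𝒱} cl V ⊆ U. -/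
def nqSet (X : Type u) [TopologicalSpace X] : Set Cardinal.{u} :=
  {κ : Cardinal.{u} | ℵ₀ ≤ κ ∧ ∀ U : Set X, IsOpen U → U.Nonempty →
    ∃ 𝒱 : Set (Set X), (∀ V ∈ 𝒱, IsOpen V) ∧ #𝒱 ≤ κ ∧
      (⋂₀ 𝒱).Nonempty ∧ (⋂ V ∈ 𝒱, closure V) ⊆ U}

/-- A space is an nq-space if its nonquasiregularity degree is defined. -/
def IsNqSpace (X : Type u) [TopologicalSpace X] : Prop :=
  (nqSet X).Nonempty

/-- The nonquasiregularity degree of a space. -/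
noncomputable def nq (X : Type u) [TopologicalSpace X] : Cardinal.{u} :=
  sInf (nqSet X)

/-- The closed pseudocharacter at a point. -/
noncomputable def psiCPoint (X : Type u) [TopologicalSpace X] (x : X) : Cardinal.{u} :=
  sInf {κ : Cardinal.{u} | ℵ₀ ≤ κ ∧ ∃ 𝒱 : Set (Set X),
    (∀ V ∈ 𝒱, IsOpen V ∧ x ∈ V) ∧ #𝒱 ≤ κ ∧ (⋂ V ∈ 𝒱, closure V) = {x}}

/-- The closed pseudocharacter of a space. -/
noncomputable def psiC (X : Type u) [TopologicalSpace X] : Cardinal.{u} :=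
  sInf {κ : Cardinal.{u} | ℵ₀ ≤ κ ∧ ∀ x : X, ∃ 𝒱 : Set (Set X),
    (∀ V ∈ 𝒱, IsOpen V ∧ x ∈ V) ∧ #𝒱 ≤ κ ∧ (⋂ V ∈ 𝒱, closure V) = {x}}

/-- The dense closed pseudocharacter of a space. -/
noncomputable def dPsiC (X : Type u) [TopologicalSpace X] : Cardinal.{u} :=
  sInf {κ : Cardinal.{u} | ℵ₀ ≤ κ ∧ ∃ D : Set X, Dense D ∧ ∀ d ∈ D, psiCPoint X d ≤ κ}

/-- The weak closed pseudocharacter at a point: the least infinite cardinality of a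
family 𝒱 of open sets with ⋂_{V ∈ 𝒱} cl V = {x}. -/
noncomputable def wPsiCPoint (X : Type u) [TopologicalSpace X] (x : X) : Cardinal.{u} :=
  sInf {κ : Cardinal.{u} | ℵ₀ ≤ κ ∧ ∃ 𝒱 : Set (Set X),
    (∀ V ∈ 𝒱, IsOpen V) ∧ #𝒱 ≤ κ ∧ (⋂ V ∈ 𝒱, closure V) = {x}}

/-- The weak closed pseudocharacter of a space. -/
noncomputable def wPsiC (X : Type u) [TopologicalSpace X] : Cardinal.{u} :=
  ⨆ x : X, wPsiCPoint X x

/-- The pseudocharacter of a space: the least infinite cardinal κ such that every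
point is the intersection of at most κ open sets. -/
noncomputable def psi (X : Type u) [TopologicalSpace X] : Cardinal.{u} :=
  sInf {κ : Cardinal.{u} | ℵ₀ ≤ κ ∧ ∀ x : X, ∃ 𝒱 : Set (Set X),
    (∀ V ∈ 𝒱, IsOpen V) ∧ #𝒱 ≤ κ ∧ ⋂₀ 𝒱 = {x}}

/-- The Lindelöf degree of a space. -/
noncomputable def lindelofDegree (X : Type u) [TopologicalSpace X] : Cardinal.{u} :=
  sInf {κ : Cardinal.{u} | ℵ₀ ≤ κ ∧ ∀ 𝒰 : Set (Set X), (∀ U ∈ 𝒰, IsOpen U) →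
    ⋃₀ 𝒰 = Set.univ → ∃ 𝒱 ⊆ 𝒰, #𝒱 ≤ κ ∧ ⋃₀ 𝒱 = Set.univ}

/-- The cardinality of the collection of regular open subsets of a space. -/
noncomputable def cardRO (X : Type u) [TopologicalSpace X] : Cardinal.{u} :=
  #{R : Set X | R = interior (closure R)}

/-- A space is quasiregular if every nonempty open set contains a nonempty open
set whose closure is contained in it. -/
def Quasiregular (X : Type u) [TopologicalSpace X] : Prop :=
  ∀ U : Set X, IsOpen U → U.Nonempty →
    ∃ V : Set X, IsOpen V ∧ V.Nonempty ∧ closure V ⊆ U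

/-!
Fix local π-bases `B x` with `#(B x) ≤ πχ(X)`, and let `κ = c(X)·nq(X)` and `ρ = πχ(X)^κ`, so
that `ρ^κ = ρ` and `κ⁺ ≤ 2^κ ≤ ρ`. Close off, in `κ⁺` stages, under the operation which, for every
family `𝒢` of at most `nq(X)` families `𝒲` of at most `c(X)` members of the π-bases at points
already chosen, adds a point outside all the closures `cl ⋃ 𝒲` (if there is one); each stage has
size `≤ ρ`. Since `κ⁺` is regular, any `κ` chosen points appear at a single stage.

The resulting set `D` is dense. Otherwise `nq(X)` gives open sets `V ∈ 𝒱`, `#𝒱 ≤ nq(X)`, with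
`⋂ 𝒱 ≠ ∅` and `⋂ cl V ⊆ X \ cl D`. By cellularity, the members of the π-bases at points of `D`
that miss `cl V` have a subfamily `𝒲 V` of size `≤ c(X)` with the same closure of the union. Every
point of `D` lies outside some `cl V`, hence in `cl ⋃ 𝒲 V`, while the points of `⋂ 𝒱` lie in none of
these closures; so the closure step applied to `{𝒲 V | V ∈ 𝒱}` should have put such a point in `D`.
-/

section ClosingOff

variable {α : Type u} (G : Set α → Set α)

noncomputable def closingOffStage (o : Ordinal.{u}) : Set α :=
  (⋃ o' < o, closingOffStage o') ∪ G (⋃ o' < o, closingOffStage o')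
termination_by o

theorem closingOffStage_eq (o : Ordinal.{u}) :
    closingOffStage G o =
      (⋃ o' < o, closingOffStage G o') ∪ G (⋃ o' < o, closingOffStage G o') := by
  rw [closingOffStage]

variable {G}

theorem mk_closingOffStage_le {ρ : Cardinal.{u}} (hρ : ℵ₀ ≤ ρ)
    (hG : ∀ A : Set α, #A ≤ ρ → #(G A) ≤ ρ) {o : Ordinal.{u}} (ho : o.card ≤ ρ) :
    #(closingOffStage G o) ≤ ρ := by
  induction o using WellFoundedLT.induction with
  | _ o ih =>
    have hunion : #(⋃ o' < o, closingOffStage G o') ≤ ρ :=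
      mk_biUnion_le_of_le ho hρ _ fun o' ho' => ih o' ho' ((Ordinal.card_le_card ho'.le).trans ho)
    rw [closingOffStage_eq]
    exact (mk_union_le _ _).trans ((add_le_add hunion (hG _ hunion)).trans (add_eq_self hρ).le)

theorem exists_mk_le_closed_under_small_subsets {κ ρ : Cardinal.{u}} (hG : Monotone G)
    (hκ : ℵ₀ ≤ κ) (hκρ : Order.succ κ ≤ ρ) (hGρ : ∀ A : Set α, #A ≤ ρ → #(G A) ≤ ρ) :
    ∃ D : Set α, #D ≤ ρ ∧ ∀ S ⊆ D, #S ≤ κ → G S ⊆ D := by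
  have hρ : ℵ₀ ≤ ρ := hκ.trans ((Order.le_succ κ).trans hκρ)
  refine ⟨⋃ o < (Order.succ κ).ord, closingOffStage G o, ?_, fun S hSD hS => ?_⟩
  · refine mk_biUnion_le_of_le (by rwa [card_ord]) hρ _ fun o ho => mk_closingOffStage_le hρ hGρ ?_
    exact (Ordinal.card_le_card ho.le).trans (by rwa [card_ord])
  · have hstage : ∀ s : S, ∃ o < (Order.succ κ).ord, (s : α) ∈ closingOffStage G o := fun s => by
      simpa using hSD s.2
    choose o ho hso using hstage
    have hsup : ⨆ s, o s < (Order.succ κ).ord := by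
      refine Ordinal.iSup_lt_of_lt_cof ?_ ho
      rw [(isRegular_succ hκ).cof_ord]
      exact hS.trans_lt (Order.lt_succ_of_not_isMax (not_isMax κ))
    have hS' : S ⊆ ⋃ o' < Order.succ (⨆ s, o s), closingOffStage G o' := fun s hs =>
      mem_biUnion (Order.lt_succ_iff.2 (Ordinal.le_iSup o ⟨s, hs⟩)) (hso ⟨s, hs⟩)
    have hsucc : Order.succ (⨆ s, o s) < (Order.succ κ).ord :=
      (isSuccLimit_ord (hκ.trans (Order.le_succ κ))).succ_lt hsup
    refine ((hG hS').trans ?_).trans (subset_biUnion_of_mem hsucc)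
    rw [closingOffStage_eq G (Order.succ _)]
    exact subset_union_right

end ClosingOff

theorem power_power_eq_of_le {a μ κ : Cardinal} (hμ : ℵ₀ ≤ μ) (hκ : κ ≤ μ) (hκ₀ : κ ≠ 0) :
    (a ^ μ) ^ κ = a ^ μ := by
  rw [← power_mul, mul_eq_left hμ hκ hκ₀]

section SmallSubsets

variable {α : Type u}

def smallSubsets (s : Set α) (κ : Cardinal.{u}) : Set (Set α) := {t | t ⊆ s ∧ #t ≤ κ}

theorem smallSubsets_mono {s t : Set α} {κ : Cardinal.{u}} (h : s ⊆ t) :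
    smallSubsets s κ ⊆ smallSubsets t κ :=
  fun _ hu => ⟨hu.1.trans h, hu.2⟩

theorem mk_smallSubsets_le {s : Set α} {κ ρ : Cardinal.{u}} (hs : #s ≤ ρ) (hρ : ℵ₀ ≤ ρ)
    (hρκ : ρ ^ κ = ρ) : #(smallSubsets s κ) ≤ ρ :=
  (mk_bounded_subset_le s κ).trans ((power_le_power_right (max_le hs hρ)).trans hρκ.le)

theorem exists_subset_mk_le_subset_biUnion {ι : Type u} {B : ι → Set α} {D : Set ι} {s : Set α}
    (h : s ⊆ ⋃ i ∈ D, B i) : ∃ S ⊆ D, #S ≤ #s ∧ s ⊆ ⋃ i ∈ S, B i := by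
  choose f hfD hf using fun a : s => mem_iUnion₂.1 (h a.2)
  exact ⟨range f, range_subset_iff.2 hfD, mk_range_le,
    fun a ha => mem_biUnion (mem_range_self ⟨a, ha⟩) (hf ⟨a, ha⟩)⟩

theorem exists_subset_mk_le_mem_smallSubsets {ι : Type u} {B : ι → Set α} {D : Set ι}
    {c n : Cardinal.{u}} {𝒢 : Set (Set α)}
    (h𝒢 : 𝒢 ∈ smallSubsets (smallSubsets (⋃ i ∈ D, B i) c) n) :
    ∃ S ⊆ D, #S ≤ n * c ∧ 𝒢 ∈ smallSubsets (smallSubsets (⋃ i ∈ S, B i) c) n := by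
  obtain ⟨S, hSD, hScard, hS⟩ :=
    exists_subset_mk_le_subset_biUnion (sUnion_subset fun 𝒲 h𝒲 => (h𝒢.1 h𝒲).1)
  refine ⟨S, hSD, hScard.trans ((mk_sUnion_le 𝒢).trans ?_),
    fun 𝒲 h𝒲 => ⟨(subset_sUnion_of_mem h𝒲).trans hS, (h𝒢.1 h𝒲).2⟩, h𝒢.2⟩
  exact mul_le_mul' h𝒢.2 (ciSup_le' fun 𝒲 => (h𝒢.1 𝒲.2).2)

end SmallSubsets

section Topology

variable {X : Type u} [TopologicalSpace X]

theorem cellularity_mem : cellularity X ∈ {κ : Cardinal.{u} | ℵ₀ ≤ κ ∧ ∀ 𝒞 : Set (Set X),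
    (∀ U ∈ 𝒞, IsOpen U ∧ U.Nonempty) → 𝒞.PairwiseDisjoint id → #𝒞 ≤ κ} :=
  csInf_mem ⟨max ℵ₀ #(Set X), le_max_left _ _,
    fun 𝒞 _ _ => (mk_set_le 𝒞).trans (le_max_right _ _)⟩

theorem mk_le_cellularity {𝒞 : Set (Set X)} (h𝒞 : ∀ U ∈ 𝒞, IsOpen U ∧ U.Nonempty)
    (hdisj : 𝒞.PairwiseDisjoint id) : #𝒞 ≤ cellularity X :=
  cellularity_mem.2 𝒞 h𝒞 hdisj

theorem exists_pairwiseDisjoint_subset_closure_sUnion {𝒜 : Set (Set X)}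
    (h𝒜 : ∀ A ∈ 𝒜, IsOpen A) :
    ∃ 𝒪 : Set (Set X), (∀ O ∈ 𝒪, IsOpen O ∧ O.Nonempty ∧ ∃ A ∈ 𝒜, O ⊆ A) ∧
      𝒪.PairwiseDisjoint id ∧ ⋃₀ 𝒜 ⊆ closure (⋃₀ 𝒪) := by
  set 𝔖 : Set (Set (Set X)) :=
    {𝒪 | (∀ O ∈ 𝒪, IsOpen O ∧ O.Nonempty ∧ ∃ A ∈ 𝒜, O ⊆ A) ∧ 𝒪.PairwiseDisjoint id}
  obtain ⟨𝒪, h𝒪⟩ := zorn_subset 𝔖 fun 𝒞 h𝒞 hchain => ⟨⋃₀ 𝒞,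
    ⟨fun O ⟨𝒪, h𝒪, hO⟩ => (h𝒞 h𝒪).1 O hO,
      (pairwiseDisjoint_sUnion hchain.directedOn).2 fun 𝒪 h𝒪 => (h𝒞 h𝒪).2⟩,
    fun _ => subset_sUnion_of_mem⟩
  refine ⟨𝒪, h𝒪.1.1, h𝒪.1.2, fun x ⟨A, hA, hxA⟩ => mem_closure_iff.2 fun U hU hxU => ?_⟩
  by_contra hmiss
  have hnew : insert (U ∩ A) 𝒪 ∈ 𝔖 := by
    refine ⟨forall_mem_insert.2 ⟨⟨hU.inter (h𝒜 A hA), ⟨x, hxU, hxA⟩, A, hA, inter_subset_right⟩,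
      h𝒪.1.1⟩, h𝒪.1.2.insert fun O hO _ => ?_⟩
    exact disjoint_left.2 fun y hy hyO => hmiss ⟨y, hy.1, O, hO, hyO⟩
  have hUA : U ∩ A ∈ 𝒪 := h𝒪.2 hnew (subset_insert _ _) (mem_insert _ _)
  exact hmiss ⟨x, hxU, U ∩ A, hUA, hxU, hxA⟩

theorem exists_subset_mk_le_cellularity_closure_sUnion_eq {𝒜 : Set (Set X)}
    (h𝒜 : ∀ A ∈ 𝒜, IsOpen A) :
    ∃ 𝒲 ⊆ 𝒜, #𝒲 ≤ cellularity X ∧ closure (⋃₀ 𝒲) = closure (⋃₀ 𝒜) := by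
  obtain ⟨𝒪, h𝒪, hdisj, hcl⟩ := exists_pairwiseDisjoint_subset_closure_sUnion h𝒜
  choose f hf𝒜 hf using fun O : 𝒪 => (h𝒪 O O.2).2.2
  refine ⟨range f, range_subset_iff.2 hf𝒜,
    mk_range_le.trans (mk_le_cellularity (fun O hO => ⟨(h𝒪 O hO).1, (h𝒪 O hO).2.1⟩) hdisj),
    (closure_mono (sUnion_mono (range_subset_iff.2 hf𝒜))).antisymm ?_⟩
  refine closure_minimal (hcl.trans (closure_mono ?_)) isClosed_closure
  rintro x ⟨O, hO, hxO⟩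
  exact ⟨f ⟨O, hO⟩, mem_range_self _, hf ⟨O, hO⟩ hxO⟩

theorem piCharPoint_mem (x : X) : piCharPoint X x ∈
    {κ : Cardinal.{u} | ℵ₀ ≤ κ ∧ ∃ 𝒱 : Set (Set X), IsLocalPiBase X x 𝒱 ∧ #𝒱 ≤ κ} :=
  csInf_mem ⟨max ℵ₀ #(Set X), le_max_left _ _, {V : Set X | IsOpen V ∧ V.Nonempty},
    ⟨fun _ hV => hV, fun U hU hxU => ⟨U, ⟨hU, x, hxU⟩, subset_rfl⟩⟩,
    (mk_set_le _).trans (le_max_right _ _)⟩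

theorem piCharPoint_le_piChar (x : X) : piCharPoint X x ≤ piChar X :=
  le_ciSup bddAbove_of_small x

theorem exists_isLocalPiBase_mk_le_piChar (x : X) :
    ∃ 𝒱 : Set (Set X), IsLocalPiBase X x 𝒱 ∧ #𝒱 ≤ piChar X :=
  let ⟨𝒱, h𝒱, h𝒱card⟩ := (piCharPoint_mem x).2
  ⟨𝒱, h𝒱, h𝒱card.trans (piCharPoint_le_piChar x)⟩

theorem aleph0_le_piChar [Nonempty X] : ℵ₀ ≤ piChar X :=
  (piCharPoint_mem (Classical.arbitrary X)).1.trans (piCharPoint_le_piChar _)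

theorem nq_mem_nqSet (hX : IsNqSpace X) : nq X ∈ nqSet X := csInf_mem hX

theorem dens_le_mk {D : Set X} (hD : Dense D) : dens X ≤ #D := csInf_le' ⟨D, hD, rfl⟩

theorem IsLocalPiBase.mem_closure_sUnion {x : X} {𝒱 : Set (Set X)} (h𝒱 : IsLocalPiBase X x 𝒱)
    {O : Set X} (hO : IsOpen O) (hxO : x ∈ O) : x ∈ closure (⋃₀ {V ∈ 𝒱 | V ⊆ O}) := by
  refine mem_closure_iff.2 fun U hU hxU => ?_
  obtain ⟨V, hV, hVsub⟩ := h𝒱.2 (U ∩ O) (hU.inter hO) ⟨hxU, hxO⟩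
  obtain ⟨y, hy⟩ := (h𝒱.1 V hV).2
  exact ⟨y, (hVsub hy).1, V, ⟨hV, hVsub.trans inter_subset_right⟩, hy⟩

theorem dense_of_forall_subset_iUnion_closure (hX : IsNqSpace X) {B : X → Set (Set X)}
    (hB : ∀ x, IsLocalPiBase X x (B x)) {D : Set X}
    (hD : ∀ 𝒢 ∈ smallSubsets (smallSubsets (⋃ x ∈ D, B x) (cellularity X)) (nq X),
      D ⊆ ⋃ 𝒲 ∈ 𝒢, closure (⋃₀ 𝒲) → ⋃ 𝒲 ∈ 𝒢, closure (⋃₀ 𝒲) = Set.univ) :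
    Dense D := by
  rw [dense_iff_closure_eq]
  by_contra hDcl
  obtain ⟨𝒱, h𝒱open, h𝒱card, ⟨q, hq⟩, h𝒱sub⟩ := (nq_mem_nqSet hX).2 (closure D)ᶜ
    isClosed_closure.isOpen_compl (nonempty_compl.2 hDcl)
  choose 𝒲 h𝒲sub h𝒲card h𝒲cl using fun V : Set X =>
    exists_subset_mk_le_cellularity_closure_sUnion_eq (𝒜 := {W ∈ ⋃ x ∈ D, B x | W ⊆ (closure V)ᶜ})
      fun W ⟨hW, _⟩ => by
        obtain ⟨x, -, hWx⟩ := mem_iUnion₂.1 hW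
        exact ((hB x).1 W hWx).1
  have h𝒢 : 𝒲 '' 𝒱 ∈ smallSubsets (smallSubsets (⋃ x ∈ D, B x) (cellularity X)) (nq X) :=
    ⟨image_subset_iff.2 fun V _ => ⟨fun W hW => (h𝒲sub V hW).1, h𝒲card V⟩,
      mk_image_le.trans h𝒱card⟩
  have hDcov : D ⊆ ⋃ 𝒲' ∈ 𝒲 '' 𝒱, closure (⋃₀ 𝒲') := by
    intro p hp
    obtain ⟨V, hV, hpV⟩ : ∃ V ∈ 𝒱, p ∉ closure V := by
      by_contra! h
      exact h𝒱sub (mem_iInter₂.2 h) (subset_closure hp)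
    rw [biUnion_image]
    refine mem_biUnion hV ?_
    rw [h𝒲cl]
    refine closure_mono (sUnion_mono ?_)
      ((hB p).mem_closure_sUnion isClosed_closure.isOpen_compl hpV)
    exact fun W hW => ⟨mem_biUnion hp hW.1, hW.2⟩
  have hqcov : q ∉ ⋃ 𝒲' ∈ 𝒲 '' 𝒱, closure (⋃₀ 𝒲') := by
    rw [biUnion_image, mem_iUnion₂]
    rintro ⟨V, hV, hqV⟩
    have hdisj : Disjoint V (⋃₀ 𝒲 V) := disjoint_sUnion_right.2 fun W hW =>
      (disjoint_compl_right.mono_right (h𝒲sub V hW).2).mono_left subset_closure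
    exact (hdisj.closure_right (h𝒱open V hV)).ne_of_mem (hq V hV) hqV rfl
  exact hqcov (hD _ h𝒢 hDcov ▸ mem_univ q)

theorem exists_dense_mk_le [Nonempty X] (hX : IsNqSpace X) {B : X → Set (Set X)}
    (hB : ∀ x, IsLocalPiBase X x (B x)) {ρ : Cardinal.{u}} (hBρ : ∀ x, #(B x) ≤ ρ) (hρ : ℵ₀ ≤ ρ)
    (hρc : ρ ^ cellularity X = ρ) (hρn : ρ ^ nq X = ρ)
    (hsucc : Order.succ (cellularity X * nq X) ≤ ρ) :
    ∃ D : Set X, Dense D ∧ #D ≤ ρ := by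
  -- an arbitrary point when the closures cover `X`
  let pick : Set (Set (Set X)) → X := fun 𝒢 => Classical.epsilon (· ∉ ⋃ 𝒲 ∈ 𝒢, closure (⋃₀ 𝒲))
  let G : Set X → Set X := fun A =>
    pick '' smallSubsets (smallSubsets (⋃ x ∈ A, B x) (cellularity X)) (nq X)
  have hG : Monotone G := fun A A' h =>
    image_mono (smallSubsets_mono (smallSubsets_mono (biUnion_subset_biUnion_left h)))
  have hGρ : ∀ A : Set X, #A ≤ ρ → #(G A) ≤ ρ := fun A hA => by
    have hBA : #(⋃ x ∈ A, B x) ≤ ρ := (mk_biUnion_le B A).trans <|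
      (mul_le_mul' hA (ciSup_le' fun x : A => hBρ x)).trans (mul_eq_self hρ).le
    exact mk_image_le.trans (mk_smallSubsets_le (mk_smallSubsets_le hBA hρ hρc) hρ hρn)
  have hκ : ℵ₀ ≤ cellularity X * nq X :=
    cellularity_mem.1.trans (le_mul_of_one_le_right' (one_le_aleph0.trans (nq_mem_nqSet hX).1))
  obtain ⟨D, hDρ, hDG⟩ := exists_mk_le_closed_under_small_subsets hG hκ hsucc hGρ
  refine ⟨D, dense_of_forall_subset_iUnion_closure hX hB fun 𝒢 h𝒢 hD𝒢 => ?_, hDρ⟩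
  obtain ⟨S, hSD, hS, h𝒢S⟩ := exists_subset_mk_le_mem_smallSubsets h𝒢
  have hpick : pick 𝒢 ∈ D := hDG S hSD (hS.trans_eq (mul_comm _ _)) (mem_image_of_mem pick h𝒢S)
  by_contra hcov
  exact Classical.epsilon_spec ((ne_univ_iff_exists_notMem _).1 hcov) (hD𝒢 hpick)

end Topology

/-- If `X` is an nq-space then `d(X) ≤ πχ(X)^(c(X)·nq(X))`. -/
theorem stmt_0 (X : Type u) [TopologicalSpace X] (hX : IsNqSpace X) :
    dens X ≤ piChar X ^ (cellularity X * nq X) := by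
  rcases isEmpty_or_nonempty X with hX₀ | hX₀
  · exact (dens_le_mk (D := ∅) fun x => isEmptyElim x).trans (by simp)
  set c := cellularity X
  set n := nq X
  have hc : ℵ₀ ≤ c := cellularity_mem.1
  have hn : ℵ₀ ≤ n := (nq_mem_nqSet hX).1
  have hcκ : c ≤ c * n := le_mul_of_one_le_right' (one_le_aleph0.trans hn)
  have hnκ : n ≤ c * n := le_mul_of_one_le_left' (one_le_aleph0.trans hc)
  have hκ : ℵ₀ ≤ c * n := hc.trans hcκ
  have hπρ : piChar X ≤ piChar X ^ (c * n) := self_le_power _ (one_le_aleph0.trans hκ)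
  choose B hB hBcard using exists_isLocalPiBase_mk_le_piChar (X := X)
  obtain ⟨D, hD, hDρ⟩ := exists_dense_mk_le hX hB (fun x => (hBcard x).trans hπρ)
    (aleph0_le_piChar.trans hπρ)
    (power_power_eq_of_le hκ hcκ (aleph0_pos.trans_le hc).ne')
    (power_power_eq_of_le hκ hnκ (aleph0_pos.trans_le hn).ne')
    ((Order.succ_le_of_lt (cantor _)).trans
      (power_le_power_right ((natCast_lt_aleph0 (n := 2)).le.trans aleph0_le_piChar)))
  exact (dens_le_mk hD).trans hDρ
end

section
/- If X is a Hausdorff space, then nq(X) ≤ dψ_c(X). -/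
open Cardinal Set TopologicalSpace

universe u

/-!
Pick a dense set `D` witnessing `dψ_c(X)`. Every nonempty open `U` contains some `d ∈ D`, and a
family `𝒱` of at most `dψ_c(X)` open neighbourhoods of `d` with `⋂ cl V = {d} ⊆ U` is exactly
what `nq` asks for inside `U`: its intersection contains `d`, so is nonempty.
-/

lemma biInter_closure_open_nhds_eq_singleton {X : Type*} [TopologicalSpace X] [T2Space X]
    (x : X) : ⋂ V ∈ {V : Set X | IsOpen V ∧ x ∈ V}, closure V = {x} := by
  refine subset_antisymm (fun y hy => ?_)
    (singleton_subset_iff.2 <| mem_iInter₂.2 fun V hV => subset_closure hV.2)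
  by_contra hyx
  obtain ⟨U, W, hU, hW, hxU, hyW, hUW⟩ := t2_separation fun h => hyx h.symm
  exact (hUW.closure_left hW).le_bot ⟨mem_iInter₂.1 hy U ⟨hU, hxU⟩, hyW⟩

section

variable (X : Type u) [TopologicalSpace X]

lemma exists_psiCPoint_family [T2Space X] (x : X) :
    ∃ 𝒱 : Set (Set X), (∀ V ∈ 𝒱, IsOpen V ∧ x ∈ V) ∧ #𝒱 ≤ psiCPoint X x ∧
      ⋂ V ∈ 𝒱, closure V = {x} := by
  have hne : {κ : Cardinal.{u} | ℵ₀ ≤ κ ∧ ∃ 𝒱 : Set (Set X),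
      (∀ V ∈ 𝒱, IsOpen V ∧ x ∈ V) ∧ #𝒱 ≤ κ ∧ ⋂ V ∈ 𝒱, closure V = {x}}.Nonempty :=
    ⟨_, le_max_left ℵ₀ #{V : Set X | IsOpen V ∧ x ∈ V}, _, fun _ hV => hV, le_max_right _ _,
      biInter_closure_open_nhds_eq_singleton x⟩
  exact (csInf_mem hne).2

lemma dPsiC_mem :
    ℵ₀ ≤ dPsiC X ∧ ∃ D : Set X, Dense D ∧ ∀ d ∈ D, psiCPoint X d ≤ dPsiC X := by
  refine csInf_mem (s := {κ | ℵ₀ ≤ κ ∧ ∃ D : Set X, Dense D ∧ ∀ d ∈ D, psiCPoint X d ≤ κ})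
    ⟨_, le_max_left ℵ₀ (⨆ x : X, psiCPoint X x), univ, dense_univ, fun d _ => ?_⟩
  exact (le_ciSup Cardinal.bddAbove_of_small d).trans (le_max_right _ _)

variable {X}

lemma mem_nqSet_of_dense {κ : Cardinal.{u}} (hκ : ℵ₀ ≤ κ) {D : Set X} (hD : Dense D)
    (hψ : ∀ d ∈ D, ∃ 𝒱 : Set (Set X), (∀ V ∈ 𝒱, IsOpen V ∧ d ∈ V) ∧ #𝒱 ≤ κ ∧
      ⋂ V ∈ 𝒱, closure V = {d}) :
    κ ∈ nqSet X := by
  refine ⟨hκ, fun U hU hUne => ?_⟩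
  obtain ⟨d, hdD, hdU⟩ := hD.exists_mem_open hU hUne
  obtain ⟨𝒱, h𝒱, hcard, hcl⟩ := hψ d hdD
  exact ⟨𝒱, fun V hV => (h𝒱 V hV).1, hcard, ⟨d, fun V hV => (h𝒱 V hV).2⟩,
    hcl.subset.trans (singleton_subset_iff.2 hdU)⟩

end

/-- If `X` is Hausdorff then `nq(X) ≤ dψ_c(X)`. -/
theorem stmt_7 (X : Type u) [TopologicalSpace X] [T2Space X] :
    nq X ≤ dPsiC X := by
  obtain ⟨hℵ₀, D, hD, hDψ⟩ := dPsiC_mem X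
  refine csInf_le (OrderBot.bddBelow _) (mem_nqSet_of_dense hℵ₀ hD fun d hd => ?_)
  obtain ⟨𝒱, h𝒱, hcard, hcl⟩ := exists_psiCPoint_family X d
  exact ⟨𝒱, h𝒱, hcard.trans (hDψ d hd), hcl⟩
end

section
/- For any topological space X, |RO(X)| ≤ πw(X)^(c(X)), where RO(X) is the set of regular open subsets of X. -/
open Cardinal Set TopologicalSpace

universe u

/-!
A maximal disjoint family `𝒲` of π-base members inside an open set `R` is dense in `R`, so a
regular open `R` equals `int (cl (⋃ 𝒲))`. Such a family has at most `c(X)` members, hence `RO(X)`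
is the image of the set of subfamilies of size at most `c(X)` of a π-base of size `πw(X)`.
-/

theorem exists_maximal_pairwiseDisjoint_subset {α : Type*} (𝒮 : Set (Set α)) :
    ∃ 𝒲, Maximal (fun 𝒲 : Set (Set α) => 𝒲 ⊆ 𝒮 ∧ 𝒲.PairwiseDisjoint id) 𝒲 := by
  refine zorn_subset _ fun c hc hchain => ⟨⋃₀ c, ⟨?_, ?_⟩, fun _ => subset_sUnion_of_mem⟩
  · exact sUnion_subset fun 𝒲 h𝒲 => (hc h𝒲).1
  · exact (pairwiseDisjoint_sUnion hchain.directedOn).2 fun 𝒲 h𝒲 => (hc h𝒲).2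

theorem piWeight_spec (X : Type u) [TopologicalSpace X] :
    ℵ₀ ≤ piWeight X ∧ ∃ 𝒱 : Set (Set X), IsPiBase X 𝒱 ∧ #𝒱 ≤ piWeight X :=
  csInf_mem (s := {κ : Cardinal.{u} | ℵ₀ ≤ κ ∧ ∃ 𝒱 : Set (Set X), IsPiBase X 𝒱 ∧ #𝒱 ≤ κ})
    ⟨max ℵ₀ #{U : Set X | IsOpen U ∧ U.Nonempty}, le_max_left _ _, _,
      ⟨fun _ hV => hV, fun U hU hne => ⟨U, ⟨hU, hne⟩, subset_rfl⟩⟩, le_max_right _ _⟩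

section

variable {X : Type u} [TopologicalSpace X]

theorem IsPiBase.subset_closure_sUnion_of_maximal {𝒱 : Set (Set X)} (h𝒱 : IsPiBase X 𝒱)
    {R : Set X} (hR : IsOpen R) {𝒲 : Set (Set X)}
    (h𝒲 : Maximal (fun 𝒲 : Set (Set X) => 𝒲 ⊆ {V ∈ 𝒱 | V ⊆ R} ∧ 𝒲.PairwiseDisjoint id) 𝒲) :
    R ⊆ closure (⋃₀ 𝒲) := by
  intro x hx
  rw [mem_closure_iff]
  intro U hU hxU
  obtain ⟨V, hV𝒱, hVUR⟩ := h𝒱.2 (U ∩ R) (hU.inter hR) ⟨x, hxU, hx⟩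
  suffices (V ∩ ⋃₀ 𝒲).Nonempty from
    this.mono (inter_subset_inter_left _ (hVUR.trans inter_subset_left))
  -- otherwise maximality forces the nonempty `V` into `𝒲`, inside `⋃₀ 𝒲`
  by_contra hempty
  have hdisj : ∀ W ∈ 𝒲, Disjoint V W := fun W hW =>
    disjoint_left.2 fun y hyV hyW => hempty ⟨y, hyV, W, hW, hyW⟩
  have hinsert : insert V 𝒲 ⊆ 𝒲 := h𝒲.2
    ⟨insert_subset ⟨hV𝒱, hVUR.trans inter_subset_right⟩ h𝒲.1.1,
      h𝒲.1.2.insert fun W hW _ => hdisj W hW⟩ (subset_insert _ _)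
  obtain ⟨y, hy⟩ := (h𝒱.1 V hV𝒱).2
  exact hempty ⟨y, hy, V, hinsert (mem_insert _ _), hy⟩

theorem IsPiBase.exists_pairwiseDisjoint_eq_interior_closure_sUnion {𝒱 : Set (Set X)}
    (h𝒱 : IsPiBase X 𝒱) {R : Set X} (hR : R = interior (closure R)) :
    ∃ 𝒲 ⊆ 𝒱, 𝒲.PairwiseDisjoint id ∧ R = interior (closure (⋃₀ 𝒲)) := by
  obtain ⟨𝒲, h𝒲⟩ := exists_maximal_pairwiseDisjoint_subset {V ∈ 𝒱 | V ⊆ R}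
  have hRopen : IsOpen R := hR ▸ isOpen_interior
  have hclosure : closure (⋃₀ 𝒲) = closure R :=
    (closure_mono (sUnion_subset fun W hW => (h𝒲.1.1 hW).2)).antisymm
      (closure_minimal (h𝒱.subset_closure_sUnion_of_maximal hRopen h𝒲) isClosed_closure)
  exact ⟨𝒲, fun W hW => (h𝒲.1.1 hW).1, h𝒲.1.2, by rw [hclosure, ← hR]⟩

end

/-- For any space `X`, `|RO(X)| ≤ πw(X)^(c(X))`. -/
theorem stmt_10 (X : Type u) [TopologicalSpace X] :
    cardRO X ≤ piWeight X ^ cellularity X := by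
  obtain ⟨hℵ₀, 𝒱, h𝒱, h𝒱card⟩ := piWeight_spec X
  let f : {𝒲 : Set (Set X) // 𝒲 ⊆ 𝒱 ∧ #𝒲 ≤ cellularity X} → Set X :=
    fun 𝒲 => interior (closure (⋃₀ 𝒲.1))
  have hRO : {R : Set X | R = interior (closure R)} ⊆ range f := by
    intro R hR
    obtain ⟨𝒲, h𝒲𝒱, hdisj, rfl⟩ := h𝒱.exists_pairwiseDisjoint_eq_interior_closure_sUnion hR
    exact ⟨⟨𝒲, h𝒲𝒱, mk_le_cellularity (fun W hW => h𝒱.1 W (h𝒲𝒱 hW)) hdisj⟩, rfl⟩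
  calc cardRO X ≤ #(range f) := mk_le_mk_of_subset hRO
    _ ≤ #{𝒲 : Set (Set X) // 𝒲 ⊆ 𝒱 ∧ #𝒲 ≤ cellularity X} := mk_range_le
    _ ≤ max #𝒱 ℵ₀ ^ cellularity X := mk_bounded_subset_le 𝒱 _
    _ ≤ piWeight X ^ cellularity X := power_le_power_right (max_le h𝒱card hℵ₀)
end
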